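/- Let Ω = G × (1,T] with G ⊂ ℝⁿ bounded with smooth boundary, ν > 0, 0 < α < 1. Suppose u satisfies D_{*,t}^α u = ν Δₓ u + F(x,t) in Ω with continuous initial data φ and boundary data ψ. If F ≤ 0 on the closure of Ω, then u(x,t) ≤ max{max_{∂G×[1,T]} ψ, max_Ḡ φ} on the closure of Ω. -/

import Mathlib

/-!
Put `v = u - ε log t` with `ε > 0`. If `v` attained its maximum over `closure G × [1, T]` at
`(x₀, t₀)` with `x₀ ∈ G` and `t₀ > 1`, then `Δₓu(x₀, t₀) ≤ 0`, whereas the Caputo–Hadamard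
derivative of `u` at `(x₀, t₀)` is that of `v`, which is `≥ 0` because `v(x₀, ·)` peaks at `t₀`
(integrate by parts against the kernel `(log (t₀/s))^(-α)`, which increases in `s`), plus
`ε (log t₀)^(1-α) / Γ(2-α) > 0`. This contradicts `D^α u = νΔₓu + F ≤ 0`, so the maximum of `v`
is attained on the parabolic boundary, where `v ≤ u` is bounded by the data; let `ε → 0`.
-/

open Real MeasureTheory Set

/-- Caputo–Hadamard fractional derivative in the time variable, base point `1`. -/
noncomputable def caputoHadamardT {n : ℕ} (α : ℝ) (u : (Fin n → ℝ) → ℝ → ℝ)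
    (x : Fin n → ℝ) (t : ℝ) : ℝ :=
  (1 / Real.Gamma (1 - α)) * ∫ s in (1:ℝ)..t, (Real.log (t / s)) ^ (-α) * deriv (u x) s

/-- Laplacian in the space variable. -/
noncomputable def laplacianX {n : ℕ} (u : (Fin n → ℝ) → ℝ → ℝ) (x : Fin n → ℝ) (t : ℝ) : ℝ :=
  ∑ j : Fin n, iteratedDeriv 2 (fun z => u (Function.update x j z) t) (x j)

open Filter Topology

section LogKernel

variable {α t s : ℝ}

theorem hasDerivAt_log_div_rpow (hs : 0 < s) (hst : s < t) :
    HasDerivAt (fun r => log (t / r) ^ (-α)) (α * s⁻¹ * log (t / s) ^ (-α - 1)) s := by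
  have hlog : HasDerivAt (fun r => log (t / r)) (-s⁻¹) s := by
    have ht : t ≠ 0 := (hs.trans hst).ne'
    convert ((hasDerivAt_inv hs.ne').const_mul t).log (by positivity) using 1
    · simp only [div_eq_mul_inv]
    · field_simp
  convert hlog.rpow_const (p := -α) (Or.inl (log_pos ((one_lt_div hs).2 hst)).ne') using 1
  ring

theorem hasDerivAt_log_div_rpow_one_sub_div (hα1 : α < 1) (hs : 0 < s) (hst : s < t) :
    HasDerivAt (fun r => log (t / r) ^ (1 - α) / (α - 1)) (log (t / s) ^ (-α) * s⁻¹) s := by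
  have h := (hasDerivAt_log_div_rpow (α := α - 1) hs hst).div_const (α - 1)
  rw [show -(α - 1) = 1 - α by ring, show 1 - α - 1 = -α by ring] at h
  refine h.congr_deriv ?_
  field_simp [(by linarith : α - 1 ≠ 0)]

theorem log_div_rpow_neg_le (hα0 : 0 ≤ α) (hs : 0 < s) (hst : s < t) :
    log (t / s) ^ (-α) ≤ t ^ α * (t - s) ^ (-α) := by
  have ht : 0 < t := hs.trans hst
  have hlog : (t - s) / t ≤ log (t / s) := by
    have := log_le_sub_one_of_pos (div_pos hs ht)
    rw [log_div hs.ne' ht.ne'] at this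
    rw [log_div ht.ne' hs.ne']
    have : (t - s) / t = 1 - s / t := by field_simp
    linarith
  calc log (t / s) ^ (-α) ≤ ((t - s) / t) ^ (-α) :=
        rpow_le_rpow_of_nonpos (div_pos (by linarith) ht) hlog (by linarith)
    _ = t ^ α * (t - s) ^ (-α) := by
        rw [div_rpow (by linarith) ht.le, rpow_neg ht.le, div_inv_eq_mul, mul_comm]

theorem tendsto_log_div_rpow_mul_sub (hα0 : 0 ≤ α) (hα1 : α < 1) (ht : 0 < t) :
    Tendsto (fun s => log (t / s) ^ (-α) * (t - s)) (𝓝[<] t) (𝓝 0) := by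
  have hbound : Tendsto (fun s => t ^ α * (t - s) ^ (1 - α)) (𝓝[<] t) (𝓝 0) := by
    have hc : Continuous fun s : ℝ => t ^ α * (t - s) ^ (1 - α) :=
      continuous_const.mul ((continuous_const.sub continuous_id).rpow_const
        fun _ => Or.inr (by linarith))
    have h0 : (0 : ℝ) ^ (1 - α) = 0 := zero_rpow (by linarith)
    simpa [h0] using (hc.tendsto t).mono_left nhdsWithin_le_nhds
  refine tendsto_of_tendsto_of_tendsto_of_le_of_le' tendsto_const_nhds hbound ?_ ?_
  all_goals filter_upwards [Ioo_mem_nhdsLT ht] with s hs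
  · exact mul_nonneg (rpow_nonneg (log_nonneg ((one_le_div hs.1).2 hs.2.le)) _)
      (by linarith [hs.2])
  · calc log (t / s) ^ (-α) * (t - s) ≤ t ^ α * (t - s) ^ (-α) * (t - s) :=
          mul_le_mul_of_nonneg_right (log_div_rpow_neg_le hα0 hs.1 hs.2) (by linarith [hs.2])
      _ = t ^ α * (t - s) ^ (1 - α) := by
          rw [mul_assoc, ← rpow_add_one (sub_pos.2 hs.2).ne']; ring_nf

theorem continuousOn_log_div {a : ℝ} (ha : 0 < a) :
    ContinuousOn (fun r => log (t / r)) (Icc a t) :=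
  (continuousOn_const.div continuousOn_id fun _ hr => (ha.trans_le hr.1).ne').log
    fun _ hr => (div_pos (ha.trans_le (hr.1.trans hr.2)) (ha.trans_le hr.1)).ne'

theorem continuousOn_log_div_rpow_one_sub_div (hα1 : α < 1) {a : ℝ} (ha : 0 < a) :
    ContinuousOn (fun r => log (t / r) ^ (1 - α) / (α - 1)) (Icc a t) :=
  ((continuousOn_log_div ha).rpow_const fun _ _ => Or.inr (by linarith)).div_const _

theorem intervalIntegrable_log_div_rpow_mul_inv (hα1 : α < 1) {a : ℝ} (ha : 0 < a)
    (hat : a ≤ t) : IntervalIntegrable (fun s => log (t / s) ^ (-α) * s⁻¹) volume a t := by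
  refine (intervalIntegrable_iff_integrableOn_Ioc_of_le hat).2
    (intervalIntegral.integrableOn_deriv_of_nonneg (continuousOn_log_div_rpow_one_sub_div hα1 ha)
      (fun s hs => hasDerivAt_log_div_rpow_one_sub_div hα1 (ha.trans hs.1) hs.2) fun s hs => ?_)
  exact mul_nonneg (rpow_nonneg (log_nonneg ((one_le_div (ha.trans hs.1)).2 hs.2.le)) _)
      (inv_nonneg.2 (ha.trans hs.1).le)

theorem integral_log_div_rpow_mul_inv (hα1 : α < 1) {a : ℝ} (ha : 0 < a) (hat : a ≤ t) :
    ∫ s in a..t, log (t / s) ^ (-α) * s⁻¹ = log (t / a) ^ (1 - α) / (1 - α) := by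
  rw [intervalIntegral.integral_eq_sub_of_hasDerivAt_of_le hat
    (continuousOn_log_div_rpow_one_sub_div hα1 ha)
    (fun s hs => hasDerivAt_log_div_rpow_one_sub_div hα1 (ha.trans hs.1) hs.2)
    (intervalIntegrable_log_div_rpow_mul_inv hα1 ha hat),
    div_self (ha.trans_le hat).ne', log_one, zero_rpow (by linarith),
    show α - 1 = -(1 - α) by ring, div_neg, div_neg]
  ring

theorem intervalIntegrable_log_div_rpow_mul (hα1 : α < 1) {a : ℝ} (ha : 0 < a) (hat : a ≤ t)
    {w : ℝ → ℝ} (hw : ContinuousOn w (Icc a t)) :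
    IntervalIntegrable (fun s => log (t / s) ^ (-α) * w s) volume a t := by
  have hcont : ContinuousOn (fun s => s * w s) (uIcc a t) := by
    rw [uIcc_of_le hat]; exact continuousOn_id.mul hw
  refine ((intervalIntegrable_log_div_rpow_mul_inv hα1 ha hat).mul_continuousOn hcont).congr
    fun s hs => ?_
  rw [uIoc_of_le hat] at hs
  have : s ≠ 0 := (ha.trans hs.1).ne'
  field_simp

end LogKernel

section IntegrationByParts

variable {a b : ℝ} {k k' g g' : ℝ → ℝ}

theorem mul_sub_le_integral_mul_deriv_of_isMaxOn (hab : a < b)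
    (hk : ∀ s ∈ Ico a b, HasDerivAt k (k' s) s) (hk'c : ContinuousOn k' (Ico a b))
    (hk0 : 0 ≤ k a) (hk' : ∀ s ∈ Ico a b, 0 ≤ k' s)
    (hg : ∀ s ∈ Icc a b, HasDerivWithinAt g (g' s) (Icc a b) s)
    (hg'c : ContinuousOn g' (Icc a b)) (hmax : IsMaxOn g (Icc a b) b) {τ : ℝ}
    (hτ : τ ∈ Ico a b) : k τ * (g τ - g b) ≤ ∫ s in a..τ, k s * g' s := by
  have hsub : Icc a τ ⊆ Ico a b := fun s hs => ⟨hs.1, hs.2.trans_lt hτ.2⟩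
  have hsub' : Icc a τ ⊆ Icc a b := fun s hs => ⟨hs.1, hs.2.trans hτ.2.le⟩
  have hk_deriv : ∀ s ∈ uIcc a τ, HasDerivWithinAt k (k' s) (uIcc a τ) s := by
    rw [uIcc_of_le hτ.1]; exact fun s hs => (hk s (hsub hs)).hasDerivWithinAt
  have hg_deriv :
      ∀ s ∈ uIcc a τ, HasDerivWithinAt (fun s => g s - g b) (g' s) (uIcc a τ) s := by
    rw [uIcc_of_le hτ.1]; exact fun s hs => ((hg s (hsub' hs)).mono hsub').sub_const _
  rw [intervalIntegral.integral_mul_deriv_eq_deriv_mul_of_hasDerivWithinAt hk_deriv hg_deriv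
    ((hk'c.mono hsub).intervalIntegrable_of_Icc hτ.1)
    ((hg'c.mono hsub').intervalIntegrable_of_Icc hτ.1)]
  have hrest : 0 ≤ ∫ s in a..τ, k' s * (g b - g s) :=
    intervalIntegral.integral_nonneg hτ.1 fun s hs =>
      mul_nonneg (hk' s (hsub hs)) (sub_nonneg.2 (hmax (hsub' hs)))
  have hneg : ∫ s in a..τ, k' s * (g s - g b) = -∫ s in a..τ, k' s * (g b - g s) := by
    rw [← intervalIntegral.integral_neg]; congr 1; ext s; ring
  have hleft : 0 ≤ k a * (g b - g a) :=
    mul_nonneg hk0 (sub_nonneg.2 (hmax (left_mem_Icc.2 hab.le)))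
  linarith

theorem integral_mul_deriv_nonneg_of_isMaxOn (hab : a < b)
    (hk : ∀ s ∈ Ico a b, HasDerivAt k (k' s) s) (hk'c : ContinuousOn k' (Ico a b))
    (hk0 : ∀ s ∈ Ico a b, 0 ≤ k s) (hk' : ∀ s ∈ Ico a b, 0 ≤ k' s)
    (hlim : Tendsto (fun s => k s * (b - s)) (𝓝[<] b) (𝓝 0))
    (hg : ∀ s ∈ Icc a b, HasDerivWithinAt g (g' s) (Icc a b) s)
    (hg'c : ContinuousOn g' (Icc a b)) (hmax : IsMaxOn g (Icc a b) b)
    (hint : IntervalIntegrable (fun s => k s * g' s) volume a b) :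
    0 ≤ ∫ s in a..b, k s * g' s := by
  obtain ⟨C, hC⟩ := isCompact_Icc.exists_bound_of_continuousOn hg'c
  have hlip : ∀ τ ∈ Icc a b, g b - g τ ≤ C * (b - τ) := by
    intro τ hτ
    have hsub : Icc τ b ⊆ Icc a b := Icc_subset_Icc_left hτ.1
    have := (convex_Icc τ b).norm_image_sub_le_of_norm_hasDerivWithin_le
      (fun s hs => (hg s (hsub hs)).mono hsub) (fun s hs => hC s (hsub hs))
      (left_mem_Icc.2 hτ.2) (right_mem_Icc.2 hτ.2)
    rw [Real.norm_eq_abs, Real.norm_eq_abs, abs_of_nonneg (sub_nonneg.2 hτ.2)] at this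
    exact (le_abs_self _).trans this
  have hpartial : ∀ τ ∈ Ico a b, -(C * (k τ * (b - τ))) ≤ ∫ s in a..τ, k s * g' s := by
    intro τ hτ
    have hright : k τ * (g b - g τ) ≤ k τ * (C * (b - τ)) :=
      mul_le_mul_of_nonneg_left (hlip τ (Ico_subset_Icc_self hτ)) (hk0 τ hτ)
    linarith [mul_sub_le_integral_mul_deriv_of_isMaxOn hab hk hk'c (hk0 a (left_mem_Ico.2 hab))
      hk' hg hg'c hmax hτ]
  have hprim : Tendsto (fun τ => ∫ s in a..τ, k s * g' s) (𝓝[<] b)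
      (𝓝 (∫ s in a..b, k s * g' s)) := by
    have h := intervalIntegral.continuousOn_primitive_interval' hint left_mem_uIcc b
      right_mem_uIcc
    rw [uIcc_of_le hab.le] at h
    rw [← nhdsWithin_Ioo_eq_nhdsLT hab]
    exact h.mono_left (nhdsWithin_mono _ Ioo_subset_Icc_self)
  have hbound : Tendsto (fun τ => -(C * (k τ * (b - τ)))) (𝓝[<] b) (𝓝 0) := by
    simpa using (hlim.const_mul C).neg
  exact le_of_tendsto_of_tendsto hbound hprim
    (eventually_of_mem (Ioo_mem_nhdsLT hab) fun τ hτ => hpartial τ (Ioo_subset_Ico_self hτ))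

end IntegrationByParts

theorem integral_log_div_rpow_mul_nonneg_of_isMaxOn {α a t : ℝ} {g g' : ℝ → ℝ} (hα0 : 0 < α)
    (hα1 : α < 1) (ha : 0 < a) (hat : a < t)
    (hg : ∀ s ∈ Icc a t, HasDerivWithinAt g (g' s) (Icc a t) s)
    (hg'c : ContinuousOn g' (Icc a t)) (hmax : IsMaxOn g (Icc a t) t) :
    0 ≤ ∫ s in a..t, log (t / s) ^ (-α) * g' s := by
  have hpos : ∀ {s}, s ∈ Ico a t → 0 < s := fun hs => ha.trans_le hs.1
  have hlog : ∀ {s}, s ∈ Ico a t → 0 ≤ log (t / s) := fun hs =>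
    log_nonneg ((one_le_div (hpos hs)).2 hs.2.le)
  have hk'c : ContinuousOn (fun s => α * s⁻¹ * log (t / s) ^ (-α - 1)) (Ico a t) :=
    (continuousOn_const.mul (continuousOn_inv₀.mono fun s hs => (hpos hs).ne')).mul
      (((continuousOn_log_div ha).mono Ico_subset_Icc_self).rpow_const fun s hs =>
        Or.inl (log_pos ((one_lt_div (hpos hs)).2 hs.2)).ne')
  exact integral_mul_deriv_nonneg_of_isMaxOn hat
    (fun s hs => hasDerivAt_log_div_rpow (hpos hs) hs.2) hk'c
    (fun s hs => rpow_nonneg (hlog hs) _)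
    (fun s hs => mul_nonneg (mul_nonneg hα0.le (inv_nonneg.2 (hpos hs).le))
      (rpow_nonneg (hlog hs) _))
    (tendsto_log_div_rpow_mul_sub hα0.le hα1 (ha.trans hat)) hg hg'c hmax
    (intervalIntegrable_log_div_rpow_mul hα1 ha hat.le hg'c)

theorem integral_log_div_rpow_mul_deriv_pos {α ε t : ℝ} {f : ℝ → ℝ} (hα0 : 0 < α) (hα1 : α < 1)
    (hε : 0 < ε) (ht : 1 < t) (hf : ContDiffOn ℝ 1 f (Icc 1 t))
    (hmax : IsMaxOn (fun s => f s - ε * log s) (Icc 1 t) t) :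
    0 < ∫ s in (1 : ℝ)..t, log (t / s) ^ (-α) * deriv f s := by
  set f' := derivWithin f (Icc 1 t)
  have hpos : ∀ {s}, s ∈ Icc 1 t → 0 < s := fun hs => one_pos.trans_le hs.1
  have hg'c : ContinuousOn (fun s => f' s - ε * s⁻¹) (Icc 1 t) :=
    (hf.continuousOn_derivWithin (uniqueDiffOn_Icc ht) le_rfl).sub
      (continuousOn_const.mul (continuousOn_inv₀.mono fun s hs => (hpos hs).ne'))
  have hg : ∀ s ∈ Icc 1 t,
      HasDerivWithinAt (fun s => f s - ε * log s) (f' s - ε * s⁻¹) (Icc 1 t) s := fun s hs =>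
    (hf.differentiableOn one_ne_zero s hs).hasDerivWithinAt.sub
      ((hasDerivAt_log (hpos hs).ne').hasDerivWithinAt.const_mul ε)
  have hderiv : ∫ s in (1 : ℝ)..t, log (t / s) ^ (-α) * deriv f s
      = ∫ s in (1 : ℝ)..t, log (t / s) ^ (-α) * f' s := by
    refine intervalIntegral.integral_congr_uIoo fun s hs => ?_
    rw [uIoo_of_le ht.le] at hs
    simp only [f', derivWithin_of_mem_nhds (Icc_mem_nhds hs.1 hs.2)]
  have hsplit : ∫ s in (1 : ℝ)..t, log (t / s) ^ (-α) * f' s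
      = (∫ s in (1 : ℝ)..t, log (t / s) ^ (-α) * (f' s - ε * s⁻¹))
        + ε * ∫ s in (1 : ℝ)..t, log (t / s) ^ (-α) * s⁻¹ := by
    rw [← intervalIntegral.integral_const_mul, ← intervalIntegral.integral_add
      (intervalIntegrable_log_div_rpow_mul hα1 one_pos ht.le hg'c)
      ((intervalIntegrable_log_div_rpow_mul_inv hα1 one_pos ht.le).const_mul ε)]
    congr 1; ext s; ring
  have hlogt : 0 < log t ^ (1 - α) / (1 - α) :=
    div_pos (rpow_pos_of_pos (log_pos ht) _) (by linarith)
  rw [hderiv, hsplit, integral_log_div_rpow_mul_inv hα1 one_pos ht.le, div_one]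
  linarith [integral_log_div_rpow_mul_nonneg_of_isMaxOn hα0 hα1 one_pos ht hg hg'c hmax,
    mul_pos hε hlogt]

theorem IsLocalMax.iteratedDeriv_two_nonpos {f : ℝ → ℝ} {a : ℝ} (h : IsLocalMax f a)
    (hc : ContinuousAt f a) : iteratedDeriv 2 f a ≤ 0 := by
  rw [iteratedDeriv_succ, iteratedDeriv_one]
  by_contra! hpos
  have hconst : f =ᶠ[𝓝 a] fun _ => f a :=
    ((isLocalMin_of_deriv_deriv_pos hpos h.deriv_eq_zero hc).and h).mono fun _ hy =>
      le_antisymm hy.2 hy.1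
  have hderiv : deriv f =ᶠ[𝓝 a] fun _ => 0 :=
    hconst.eventuallyEq_nhds.mono fun _ hy => by rw [hy.deriv_eq, deriv_const]
  rw [hderiv.deriv_eq, deriv_const] at hpos
  exact hpos.false

theorem laplacianX_nonpos_of_isLocalMax {n : ℕ} {u : (Fin n → ℝ) → ℝ → ℝ} {x : Fin n → ℝ}
    {t : ℝ} (hmax : IsLocalMax (fun y => u y t) x) (hc : ContinuousAt (fun y => u y t) x) :
    laplacianX u x t ≤ 0 := by
  refine Finset.sum_nonpos fun j _ => ?_
  have hupd : ContinuousAt (Function.update x j) (x j) :=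
    (continuous_const.update j continuous_id).continuousAt
  rw [← Function.update_eq_self j x] at hmax hc
  exact (hmax.comp_continuous hupd).iteratedDeriv_two_nonpos (hc.comp hupd)

theorem caputoHadamardT_pos_of_isMaxOn {n : ℕ} {u : (Fin n → ℝ) → ℝ → ℝ} {x : Fin n → ℝ}
    {α ε t : ℝ} (hα0 : 0 < α) (hα1 : α < 1) (hε : 0 < ε) (ht : 1 < t)
    (hu : ContDiffOn ℝ 1 (u x) (Icc 1 t))
    (hmax : IsMaxOn (fun s => u x s - ε * log s) (Icc 1 t) t) :
    0 < caputoHadamardT α u x t :=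
  mul_pos (one_div_pos.2 (Gamma_pos_of_pos (by linarith)))
    (integral_log_div_rpow_mul_deriv_pos hα0 hα1 hε ht hu hmax)

section MaximumPrinciple

variable {n : ℕ} {G : Set (Fin n → ℝ)} {T ν α M : ℝ} {u : (Fin n → ℝ) → ℝ → ℝ}

theorem sub_mul_log_le_of_caputoHadamardT_le_laplacianX (hGopen : IsOpen G)
    (hGbdd : Bornology.IsBounded G) (hν : 0 ≤ ν) (hα0 : 0 < α) (hα1 : α < 1)
    (huc : ContinuousOn (fun p : (Fin n → ℝ) × ℝ => u p.1 p.2) (closure G ×ˢ Icc 1 T))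
    (hureg : ∀ x ∈ G, ContDiffOn ℝ 1 (u x) (Icc 1 T))
    (hsub : ∀ x ∈ G, ∀ t ∈ Ioc 1 T, caputoHadamardT α u x t ≤ ν * laplacianX u x t)
    (hinit : ∀ x ∈ closure G, u x 1 ≤ M) (hbdry : ∀ x ∈ frontier G, ∀ t ∈ Icc 1 T, u x t ≤ M)
    {ε : ℝ} (hε : 0 < ε) {x : Fin n → ℝ} (hx : x ∈ closure G) {t : ℝ} (ht : t ∈ Icc 1 T) :
    u x t - ε * log t ≤ M := by
  obtain ⟨⟨x₀, t₀⟩, ⟨hx₀, ht₀⟩, hmax⟩ :=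
    (hGbdd.isCompact_closure.prod isCompact_Icc).exists_isMaxOn ⟨(x, t), hx, ht⟩
      (huc.sub (continuousOn_const.mul (continuousOn_snd.log fun p hp =>
        (one_pos.trans_le hp.2.1).ne')))
  have hle : ∀ y ∈ closure G, ∀ s ∈ Icc 1 T, u y s - ε * log s ≤ u x₀ t₀ - ε * log t₀ :=
    fun y hy s hs => hmax (mk_mem_prod hy hs)
  refine (hle x hx t ht).trans ?_
  by_cases hfr : x₀ ∈ frontier G
  · linarith [hbdry x₀ hfr t₀ ht₀, mul_nonneg hε.le (log_nonneg ht₀.1)]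
  have hx₀G : x₀ ∈ G := by
    by_contra h
    exact hfr (hGopen.frontier_eq ▸ ⟨hx₀, h⟩)
  rcases ht₀.1.eq_or_lt with rfl | ht₀1
  · simpa using hinit x₀ hx₀
  exfalso
  have hGnhds : G ∈ 𝓝 x₀ := hGopen.mem_nhds hx₀G
  have hlap : laplacianX u x₀ t₀ ≤ 0 := by
    refine laplacianX_nonpos_of_isLocalMax (eventually_of_mem hGnhds fun y hy => ?_) ?_
    · linarith [hle y (subset_closure hy) t₀ ht₀]
    · exact (huc.comp (continuousOn_id.prodMk continuousOn_const) fun y hy => ⟨hy, ht₀⟩)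
        |>.continuousAt (mem_of_superset hGnhds subset_closure)
  have hch : 0 < caputoHadamardT α u x₀ t₀ :=
    caputoHadamardT_pos_of_isMaxOn hα0 hα1 hε ht₀1
      ((hureg x₀ hx₀G).mono (Icc_subset_Icc_right ht₀.2))
      fun s hs => hle x₀ hx₀ s ⟨hs.1, hs.2.trans ht₀.2⟩
  linarith [hsub x₀ hx₀G t₀ ⟨ht₀1, ht₀.2⟩, mul_nonpos_of_nonneg_of_nonpos hν hlap]

theorem le_of_caputoHadamardT_le_laplacianX (hGopen : IsOpen G)
    (hGbdd : Bornology.IsBounded G) (hν : 0 ≤ ν) (hα0 : 0 < α) (hα1 : α < 1)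
    (huc : ContinuousOn (fun p : (Fin n → ℝ) × ℝ => u p.1 p.2) (closure G ×ˢ Icc 1 T))
    (hureg : ∀ x ∈ G, ContDiffOn ℝ 1 (u x) (Icc 1 T))
    (hsub : ∀ x ∈ G, ∀ t ∈ Ioc 1 T, caputoHadamardT α u x t ≤ ν * laplacianX u x t)
    (hinit : ∀ x ∈ closure G, u x 1 ≤ M) (hbdry : ∀ x ∈ frontier G, ∀ t ∈ Icc 1 T, u x t ≤ M)
    {x : Fin n → ℝ} (hx : x ∈ closure G) {t : ℝ} (ht : t ∈ Icc 1 T) :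
    u x t ≤ M := by
  have hlim : Tendsto (fun ε => u x t - ε * log t) (𝓝[>] 0) (𝓝 (u x t)) := by
    have hc : Continuous fun ε : ℝ => u x t - ε * log t := by fun_prop
    simpa using (hc.tendsto 0).mono_left nhdsWithin_le_nhds
  exact le_of_tendsto hlim (eventually_nhdsWithin_of_forall fun ε hε =>
    sub_mul_log_le_of_caputoHadamardT_le_laplacianX hGopen hGbdd hν hα0 hα1 huc hureg hsub
      hinit hbdry hε hx ht)

end MaximumPrinciple

theorem maximum_principle_caputoHadamard_diffusion_general
    {n : ℕ} (G : Set (Fin n → ℝ)) (hGopen : IsOpen G)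
    (hGbdd : Bornology.IsBounded G)
    (T ν α : ℝ) (hν : 0 < ν) (hα0 : 0 < α) (hα1 : α < 1)
    (u F : (Fin n → ℝ) → ℝ → ℝ) (φ : (Fin n → ℝ) → ℝ) (ψ : (Fin n → ℝ) → ℝ → ℝ)
    (hφc : ContinuousOn φ (closure G))
    (hψc : ContinuousOn (fun p : (Fin n → ℝ) × ℝ => ψ p.1 p.2) (closure G ×ˢ Set.Icc 1 T))
    (huc : ContinuousOn (fun p : (Fin n → ℝ) × ℝ => u p.1 p.2) (closure G ×ˢ Set.Icc 1 T))
    (hureg : ∀ x ∈ G, ContDiffOn ℝ 1 (u x) (Set.Icc 1 T))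
    (heq : ∀ x ∈ G, ∀ t ∈ Set.Ioc (1:ℝ) T,
      caputoHadamardT α u x t = ν * laplacianX u x t + F x t)
    (hinit : ∀ x ∈ closure G, u x 1 = φ x)
    (hbdry : ∀ x ∈ frontier G, ∀ t ∈ Set.Icc (1:ℝ) T, u x t = ψ x t)
    (hF : ∀ x ∈ closure G, ∀ t ∈ Set.Icc (1:ℝ) T, F x t ≤ 0) :
    ∀ x ∈ closure G, ∀ t ∈ Set.Icc (1:ℝ) T,
      u x t ≤ max (sSup {y : ℝ | ∃ x' ∈ frontier G, ∃ t' ∈ Set.Icc (1:ℝ) T, ψ x' t' = y})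
          (sSup (φ '' closure G)) := by
  have hK : IsCompact (closure G) := hGbdd.isCompact_closure
  have hψb : BddAbove {y : ℝ | ∃ x' ∈ frontier G, ∃ t' ∈ Icc (1:ℝ) T, ψ x' t' = y} := by
    refine (((hK.of_isClosed_subset isClosed_frontier frontier_subset_closure).prod
      isCompact_Icc).image_of_continuousOn
      (hψc.mono (prod_mono frontier_subset_closure subset_rfl))).bddAbove.mono ?_
    rintro _ ⟨x, hx, t, ht, rfl⟩
    exact ⟨(x, t), ⟨hx, ht⟩, rfl⟩
  have hφb : BddAbove (φ '' closure G) := (hK.image_of_continuousOn hφc).bddAbove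
  intro x hx t ht
  refine le_of_caputoHadamardT_le_laplacianX hGopen hGbdd hν.le hα0 hα1 huc hureg
    (fun y hy s hs => ?_) (fun y hy => ?_) (fun y hy s hs => ?_) hx ht
  · linarith [heq y hy s hs, hF y (subset_closure hy) s (Ioc_subset_Icc_self hs)]
  · exact hinit y hy ▸ (le_csSup hφb (mem_image_of_mem φ hy)).trans (le_max_right _ _)
  · exact hbdry y hy s hs ▸ (le_csSup hψb ⟨y, hy, s, hs, rfl⟩).trans (le_max_left _ _)

theorem maximum_principle_caputoHadamard_diffusion
    {n : ℕ} (G : Set (Fin n → ℝ)) (hGopen : IsOpen G) (hGne : G.Nonempty)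
    (hGbdd : Bornology.IsBounded G)
    (T ν α : ℝ) (hT : 1 < T) (hν : 0 < ν) (hα0 : 0 < α) (hα1 : α < 1)
    (u F : (Fin n → ℝ) → ℝ → ℝ) (φ : (Fin n → ℝ) → ℝ) (ψ : (Fin n → ℝ) → ℝ → ℝ)
    (hFc : ContinuousOn (fun p : (Fin n → ℝ) × ℝ => F p.1 p.2) (closure G ×ˢ Set.Icc 1 T))
    (hφc : ContinuousOn φ (closure G))
    (hψc : ContinuousOn (fun p : (Fin n → ℝ) × ℝ => ψ p.1 p.2) (closure G ×ˢ Set.Icc 1 T))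
    (huc : ContinuousOn (fun p : (Fin n → ℝ) × ℝ => u p.1 p.2) (closure G ×ˢ Set.Icc 1 T))
    (hureg : ∀ x ∈ G, ContDiffOn ℝ 1 (u x) (Set.Icc 1 T))
    (heq : ∀ x ∈ G, ∀ t ∈ Set.Ioc (1:ℝ) T,
      caputoHadamardT α u x t = ν * laplacianX u x t + F x t)
    (hinit : ∀ x ∈ closure G, u x 1 = φ x)
    (hbdry : ∀ x ∈ frontier G, ∀ t ∈ Set.Icc (1:ℝ) T, u x t = ψ x t)
    (hF : ∀ x ∈ closure G, ∀ t ∈ Set.Icc (1:ℝ) T, F x t ≤ 0) :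
    ∀ x ∈ closure G, ∀ t ∈ Set.Icc (1:ℝ) T,
      u x t ≤ max (sSup {y : ℝ | ∃ x' ∈ frontier G, ∃ t' ∈ Set.Icc (1:ℝ) T, ψ x' t' = y})
          (sSup (φ '' closure G)) :=
  maximum_principle_caputoHadamard_diffusion_general G hGopen hGbdd T ν α hν hα0 hα1 u F φ ψ hφc hψc
    huc hureg heq hinit hbdry hF
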